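/- Co-analyticity for R(M_IPL): if v ∈ L_IPL is an intuitionistic level valuation and Λ is a nonempty set of intuitionistic formulas closed under subformulas, then the restriction of v to Λ belongs to iPLV'(Λ). -/
import Mathlib


/-- Intuitionistic formulas over signature Ω = {¬, →, ∨, ∧}. -/
inductive IF
  | var : ℕ → IF
  | neg : IF → IF
  | imp : IF → IF → IF
  | dis : IF → IF → IF
  | con : IF → IF → IF
deriving DecidableEq

/-- The three intuitionistic truth values F, U, T. -/
inductive VI
  | F | U | T
deriving DecidableEq

def inegOp : VI → Set VI
  | .F => {.U, .T}
  | .U => {.U, .T}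
  | .T => {.F}

def iimpOp : VI → VI → Set VI
  | .T, .T => {.T}
  | .T, _ => {.F}
  | _, .T => {.T}
  | _, _ => {.U, .T}

def idisOp : VI → VI → Set VI
  | .T, _ => {.T}
  | _, .T => {.T}
  | _, _ => {.F}

def iconOp : VI → VI → Set VI
  | .T, .T => {.T}
  | _, _ => {.F}

/-- Valuations over the Nmatrix M_IPL. -/
def IsValI (v : IF → VI) : Prop :=
  (∀ α, v (.neg α) ∈ inegOp (v α)) ∧
  (∀ α β, v (.imp α β) ∈ iimpOp (v α) (v β)) ∧
  (∀ α β, v (.dis α β) ∈ idisOp (v α) (v β)) ∧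
  (∀ α β, v (.con α β) ∈ iconOp (v α) (v β))

/-- Val₊(M_IPL): valuations taking only values T, F on propositional variables. -/
def ValPlus : Set (IF → VI) :=
  {v | IsValI v ∧ ∀ n, v (.var n) = VI.T ∨ v (.var n) = VI.F}

/-- Complexity of an intuitionistic formula. -/
def co : IF → ℕ
  | .var _ => 0
  | .neg α => co α + 1
  | .imp α β => co α + co β + 1
  | .dis α β => co α + co β + 1
  | .con α β => co α + co β + 1

/-- The levels L_k for IPL. -/
def LevelI : ℕ → Set (IF → VI)
  | 0 => ValPlus
  | (k+1) => {v ∈ LevelI k | ∀ α, co α ≤ k + 1 → v α = VI.U →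
      ∃ w ∈ LevelI k, w α = VI.F ∧ ∀ β, v β = VI.T → w β = VI.T}

/-- Intuitionistic level valuations L_IPL = ⋂_{k ≥ 0} L_k. -/
def LIPL : Set (IF → VI) := ⋂ k, LevelI k

/-- The consequence relation Γ ⊢_IPL φ of the Hilbert calculus H_IPL. -/
inductive IDeriv (Γ : Set IF) : IF → Prop
  | prem {φ : IF} : φ ∈ Γ → IDeriv Γ φ
  | ax1 (α β : IF) : IDeriv Γ (α.imp (β.imp α))
  | ax2 (α β γ : IF) : IDeriv Γ ((α.imp (β.imp γ)).imp ((α.imp β).imp (α.imp γ)))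
  | ax3 (α β : IF) : IDeriv Γ (α.imp (β.imp (α.con β)))
  | ax4 (α β : IF) : IDeriv Γ ((α.con β).imp α)
  | ax5 (α β : IF) : IDeriv Γ ((α.con β).imp β)
  | ax6 (α β : IF) : IDeriv Γ (α.imp (α.dis β))
  | ax7 (α β : IF) : IDeriv Γ (β.imp (α.dis β))
  | ax8 (α β γ : IF) : IDeriv Γ ((α.imp γ).imp ((β.imp γ).imp ((α.dis β).imp γ)))
  | ax9 (α β : IF) : IDeriv Γ ((β.imp α).imp ((β.imp α.neg).imp β.neg))
  | ax10 (α β : IF) : IDeriv Γ (α.imp (α.neg.imp β))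
  | mp {α β : IF} : IDeriv Γ (α.imp β) → IDeriv Γ α → IDeriv Γ β

/-- Δ is φ-saturated (w.r.t. ⊢_IPL). -/
def ISat (Δ : Set IF) (φ : IF) : Prop :=
  ¬ IDeriv Δ φ ∧ ∀ α ∉ Δ, IDeriv (insert α Δ) φ

open Classical in
/-- The valuation v_Δ associated to a φ-saturated set Δ in IPL. -/
noncomputable def vDeltaI (Δ : Set IF) : IF → VI
  | .var n => if IF.var n ∈ Δ then VI.T else VI.F
  | .neg α => if IF.neg α ∈ Δ then VI.T else if α ∈ Δ then VI.F else VI.U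
  | .imp α β => if IF.imp α β ∈ Δ then VI.T else if α ∈ Δ then VI.F else VI.U
  | .con α β => if α ∈ Δ ∧ β ∈ Δ then VI.T else VI.F
  | .dis α β => if α ∈ Δ ∨ β ∈ Δ then VI.T else VI.F

/-- Λ is closed under (immediate, hence all) subformulas. -/
def SubClosedI (Λ : Set IF) : Prop :=
  (∀ α, IF.neg α ∈ Λ → α ∈ Λ) ∧
  (∀ α β, IF.imp α β ∈ Λ → α ∈ Λ ∧ β ∈ Λ) ∧
  (∀ α β, IF.dis α β ∈ Λ → α ∈ Λ ∧ β ∈ Λ) ∧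
  (∀ α β, IF.con α β ∈ Λ → α ∈ Λ ∧ β ∈ Λ)

/-- Intuitionistic partial valuations with domain Λ (modelled as total functions
constrained on Λ). -/
def IsPValI (Λ : Set IF) (v : IF → VI) : Prop :=
  (∀ n, IF.var n ∈ Λ → v (.var n) = VI.T ∨ v (.var n) = VI.F) ∧
  (∀ α, IF.neg α ∈ Λ → v (.neg α) ∈ inegOp (v α)) ∧
  (∀ α β, IF.imp α β ∈ Λ → v (.imp α β) ∈ iimpOp (v α) (v β)) ∧
  (∀ α β, IF.dis α β ∈ Λ → v (.dis α β) ∈ idisOp (v α) (v β)) ∧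
  (∀ α β, IF.con α β ∈ Λ → v (.con α β) ∈ iconOp (v α) (v β))

/-- iPLV'(Λ): intuitionistic partial' level valuations over Λ. -/
def iPLV' (Λ : Set IF) : Set (IF → VI) :=
  {v | IsPValI Λ v ∧ ∀ α ∈ Λ, v α = VI.U →
    ∃ w ∈ LIPL, w α = VI.F ∧ ∀ β ∈ Λ, v β = VI.T → w β = VI.T}

/-- iPLV(Λ): intuitionistic partial level valuations over Λ, defined as the largest
subset of iPV(Λ) whose condition is witnessed inside itself. -/
def iPLV (Λ : Set IF) : Set (IF → VI) :=
  ⋃₀ {S | (∀ v ∈ S, IsPValI Λ v) ∧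
      ∀ v ∈ S, ∀ α ∈ Λ, v α = VI.U →
        ∃ w ∈ S, w α = VI.F ∧ ∀ β ∈ Λ, v β = VI.T → w β = VI.T}

/-- Set of subformulas of an intuitionistic formula. -/
def IF.subf : IF → Finset IF
  | .var n => {.var n}
  | .neg α => insert (.neg α) α.subf
  | .imp α β => insert (.imp α β) (α.subf ∪ β.subf)
  | .dis α β => insert (.dis α β) (α.subf ∪ β.subf)
  | .con α β => insert (.con α β) (α.subf ∪ β.subf)

/-- Γ ⊨_iPLV φ : consequence w.r.t. the intuitionistic truth tables, over the set Λ
of subformulas of Γ ∪ {φ}. -/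
def iPLVConseq (Γ : Finset IF) (φ : IF) : Prop :=
  ∀ v ∈ iPLV (↑(Γ.biUnion IF.subf ∪ φ.subf) : Set IF),
    (∀ β ∈ Γ, v β = VI.T) → v φ = VI.T


section Aux

open Filter Topology

instance : Fintype VI := ⟨{VI.F, VI.U, VI.T}, fun x => by cases x <;> decide⟩

instance : TopologicalSpace VI := ⊥
instance : DiscreteTopology VI := ⟨rfl⟩

lemma isClosed_pairCond (f g : IF) (P : VI → VI → Prop) :
    IsClosed {v : IF → VI | P (v f) (v g)} := by
  have hc : Continuous fun v : IF → VI => (v f, v g) :=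
    (continuous_apply f).prodMk (continuous_apply g)
  exact (isClosed_discrete {p : VI × VI | P p.1 p.2}).preimage hc

lemma isOpen_coordCond (f : IF) (S : Set VI) : IsOpen {v : IF → VI | v f ∈ S} :=
  (isOpen_discrete S).preimage (continuous_apply f)

def localC : IF → Set (IF → VI)
  | .var n => {v | v (.var n) = VI.T ∨ v (.var n) = VI.F}
  | .neg α => {v | v (.neg α) ∈ inegOp (v α)}
  | .imp α β => {v | v (.imp α β) ∈ iimpOp (v α) (v β)}
  | .dis α β => {v | v (.dis α β) ∈ idisOp (v α) (v β)}
  | .con α β => {v | v (.con α β) ∈ iconOp (v α) (v β)}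

lemma isClosed_tripleCond (f g h : IF) (P : VI → VI → VI → Prop) :
    IsClosed {v : IF → VI | P (v f) (v g) (v h)} := by
  have hc : Continuous fun v : IF → VI => ((v f, v g), v h) :=
    ((continuous_apply f).prodMk (continuous_apply g)).prodMk (continuous_apply h)
  exact (isClosed_discrete {p : (VI × VI) × VI | P p.1.1 p.1.2 p.2}).preimage hc

lemma isClosed_localC (φ : IF) : IsClosed (localC φ) := by
  cases φ with
  | var n => exact isClosed_pairCond (.var n) (.var n) (fun a _ => a = VI.T ∨ a = VI.F)
  | neg α => exact isClosed_pairCond (.neg α) α (fun a b => a ∈ inegOp b)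
  | imp α β => exact isClosed_tripleCond (.imp α β) α β (fun a b c => a ∈ iimpOp b c)
  | dis α β => exact isClosed_tripleCond (.dis α β) α β (fun a b c => a ∈ idisOp b c)
  | con α β => exact isClosed_tripleCond (.con α β) α β (fun a b c => a ∈ iconOp b c)

lemma ValPlus_eq : ValPlus = ⋂ φ : IF, localC φ := by
  ext v
  simp only [Set.mem_iInter, ValPlus, IsValI, Set.mem_setOf_eq]
  constructor
  · rintro ⟨⟨h1, h2, h3, h4⟩, h5⟩ φ
    cases φ with
    | var n => exact h5 n
    | neg α => exact h1 α
    | imp α β => exact h2 α β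
    | dis α β => exact h3 α β
    | con α β => exact h4 α β
  · intro h
    exact ⟨⟨fun α => h (.neg α), fun α β => h (.imp α β), fun α β => h (.dis α β),
      fun α β => h (.con α β)⟩, fun n => h (.var n)⟩

lemma isClosed_ValPlus : IsClosed ValPlus := by
  rw [ValPlus_eq]; exact isClosed_iInter isClosed_localC

lemma mem_LevelI_succ {v : IF → VI} {k : ℕ} :
    v ∈ LevelI (k + 1) ↔ v ∈ LevelI k ∧ ∀ α, co α ≤ k + 1 → v α = VI.U →
      ∃ w ∈ LevelI k, w α = VI.F ∧ ∀ β, v β = VI.T → w β = VI.T := Iff.rfl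

lemma closed_mem_of_ultrafilter {w : IF → VI} {S : Set (IF → VI)}
    (H : Ultrafilter (IF → VI)) (hS : S ∈ H) (hle : ↑H ≤ 𝓝 w) (hc : IsClosed S) :
    w ∈ S := by
  rw [← hc.closure_eq]
  exact mem_closure_iff_ultrafilter.mpr ⟨H, hS, hle⟩

lemma isClosed_LevelI (k : ℕ) : IsClosed (LevelI k) := by
  induction k with
  | zero => exact isClosed_ValPlus
  | succ k ih =>
    refine isClosed_of_closure_subset ?_
    intro v hv
    obtain ⟨G, hG, hGv⟩ := mem_closure_iff_ultrafilter.mp hv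
    have hsub : LevelI (k + 1) ⊆ LevelI k := fun u hu => hu.1
    have hv0 : v ∈ LevelI k :=
      closed_mem_of_ultrafilter G (Filter.mem_of_superset hG hsub) hGv ih
    rw [mem_LevelI_succ]
    refine ⟨hv0, fun α hco hU => ?_⟩
    classical
    have hAopen : IsOpen {u : IF → VI | u α = VI.U} := by
      have := isOpen_coordCond α {VI.U}
      simpa using this
    have hA : {u : IF → VI | u α = VI.U} ∈ G := hGv (hAopen.mem_nhds hU)
    have hS : {u | u ∈ LevelI (k + 1) ∧ u α = VI.U} ∈ G := Filter.inter_mem hG hA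
    have hW : ∀ u : IF → VI, ∃ w, (u ∈ LevelI (k + 1) ∧ u α = VI.U) →
        w ∈ LevelI k ∧ w α = VI.F ∧ ∀ β, u β = VI.T → w β = VI.T := by
      intro u
      by_cases h : u ∈ LevelI (k + 1) ∧ u α = VI.U
      · obtain ⟨w, hw, hwF, hwT⟩ := (mem_LevelI_succ.mp h.1).2 α hco h.2
        exact ⟨w, fun _ => ⟨hw, hwF, hwT⟩⟩
      · exact ⟨v, fun h' => absurd h' h⟩
    choose f hf using hW
    set H : Ultrafilter (IF → VI) := G.map f with hHdef
    obtain ⟨w, -, hle⟩ := isCompact_univ.ultrafilter_le_nhds H (by simp)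
    have hmem : ∀ (S : Set (IF → VI)),
        (∀ u, u ∈ LevelI (k + 1) ∧ u α = VI.U → f u ∈ S) → S ∈ H := by
      intro S h
      rw [hHdef, Ultrafilter.mem_map]
      exact Filter.mem_of_superset hS fun u hu => h u hu
    refine ⟨w, ?_, ?_, ?_⟩
    · exact closed_mem_of_ultrafilter H
        (hmem _ fun u hu => (hf u hu).1) hle ih
    · exact closed_mem_of_ultrafilter H
        (hmem _ fun u hu => (hf u hu).2.1) hle
        (isClosed_pairCond α α (fun a _ => a = VI.F))
    · intro β hβ
      have hBopen : IsOpen {u : IF → VI | u β = VI.T} := by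
        have := isOpen_coordCond β {VI.T}
        simpa using this
      have hB : {u : IF → VI | u β = VI.T} ∈ G := hGv (hBopen.mem_nhds hβ)
      have hSB : {w : IF → VI | w β = VI.T} ∈ H := by
        rw [hHdef, Ultrafilter.mem_map]
        exact Filter.mem_of_superset (Filter.inter_mem hS hB)
          fun u hu => (hf u hu.1).2.2 β hu.2
      exact closed_mem_of_ultrafilter H hSB hle
        (isClosed_pairCond β β (fun a _ => a = VI.T))

lemma LevelI_antitone : ∀ {m n : ℕ}, m ≤ n → LevelI n ⊆ LevelI m := by
  intro m n h
  induction h with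
  | refl => exact fun _ h => h
  | step h ih => exact fun u hu => (ih (hu.1))
end Aux

/-- Co-analyticity for R(M_IPL): the restriction of an
intuitionistic level valuation to a nonempty subformula-closed Λ is in iPLV'(Λ). -/
theorem ipl_coanalyticity (v : IF → VI) (hv : v ∈ LIPL) (Λ : Set IF)
    (hne : Λ.Nonempty) (hcl : SubClosedI Λ) :
    v ∈ iPLV' Λ := by
  have hv0 : v ∈ ValPlus := Set.mem_iInter.mp hv 0
  constructor
  · exact ⟨fun n _ => hv0.2 n, fun α _ => hv0.1.1 α, fun α β _ => hv0.1.2.1 α β,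
      fun α β _ => hv0.1.2.2.1 α β, fun α β _ => hv0.1.2.2.2 α β⟩
  · intro α hαΛ hU
    set S : ℕ → Set (IF → VI) := fun k =>
      {w | w ∈ LevelI k ∧ w α = VI.F ∧ ∀ β, v β = VI.T → w β = VI.T} with hSdef
    have hclosed : ∀ k, IsClosed (S k) := by
      intro k
      have h1 : IsClosed {w : IF → VI | w α = VI.F} :=
        isClosed_pairCond α α (fun a _ => a = VI.F)
      have h2 : IsClosed {w : IF → VI | ∀ β, v β = VI.T → w β = VI.T} := by
        have : {w : IF → VI | ∀ β, v β = VI.T → w β = VI.T} =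
            ⋂ β : IF, {w : IF → VI | v β = VI.T → w β = VI.T} := by
          ext w; simp
        rw [this]
        exact isClosed_iInter fun β =>
          isClosed_pairCond β β (fun a _ => v β = VI.T → a = VI.T)
      exact (isClosed_LevelI k).inter (h1.inter h2)
    have hne' : ∀ k, (S k).Nonempty := by
      intro k
      have hvK : v ∈ LevelI (max k (co α) + 1) := Set.mem_iInter.mp hv _
      obtain ⟨w, hw, hwF, hwT⟩ := (mem_LevelI_succ.mp hvK).2 α
        (le_trans (le_max_right k (co α)) (Nat.le_succ _)) hU
      exact ⟨w, LevelI_antitone (le_max_left k (co α)) hw, hwF, hwT⟩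
    have hsub : ∀ k, S (k + 1) ⊆ S k := fun k w hw =>
      ⟨LevelI_antitone (Nat.le_succ k) hw.1, hw.2⟩
    obtain ⟨w, hw⟩ := IsCompact.nonempty_iInter_of_sequence_nonempty_isCompact_isClosed
      S hsub hne' ((hclosed 0).isCompact) hclosed
    refine ⟨w, ?_, ?_, ?_⟩
    · exact Set.mem_iInter.mpr fun k => (Set.mem_iInter.mp hw k).1
    · exact (Set.mem_iInter.mp hw 0).2.1
    · exact fun β _ hβ => (Set.mem_iInter.mp hw 0).2.2 β hβ
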